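/- arXiv:math/0605490 — 2 statements merged into one kernel-verified Lean document; each statement's English description precedes it below -/
import Mathlib

section
/- The sequence Q*_k := N*_k / (2k)! is submultiplicative: for all integers k₁, k₂ ≥ 1, N*_{k₁+k₂} / (2(k₁+k₂))! ≤ (N*_{k₁} / (2k₁)!) · (N*_{k₂} / (2k₂)!). Consequently, lim_{k→∞} (Q*_k)^{1/k} exists and equals inf_{k ≥ 1} (Q*_k)^{1/k}. -/
/-!
Whether a bijection `g` is admissible depends only on the relative order of its values, and
admissibility passes to the restrictions of `g` to the first `a` and to the last `b` index pairs.
A bijection is determined by the set of positions taken by the first `a` pairs together with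
the standardizations of both restrictions, so `N*_{a+b} ≤ N*_a N*_b C(2(a+b), 2a)`, which after
dividing by `(2(a+b))!` reads `Q*_{a+b} ≤ Q*_a Q*_b`. The limit is then Fekete's lemma for the
subadditive sequence `log Q*_k`.
-/

/-- `N*_k`: the number of bijections `g` from `{x₁,…,x_k, y₁,…,y_k}` (encoded as
`Fin k ⊕ Fin k`, with `x_i = Sum.inl i` and `y_i = Sum.inr i`) onto `[2k]` such that
(1) `g(y_j) < g(x_j)` for every `j`, and (2) for all `i < j`, if `g(x_i) < g(x_j)`
then `g(y_i) < g(y_j)`. -/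
noncomputable def NstarCount (k : ℕ) : ℕ :=
  Nat.card {g : (Fin k ⊕ Fin k) ≃ Fin (2 * k) //
    (∀ j : Fin k, g (Sum.inr j) < g (Sum.inl j)) ∧
    (∀ i j : Fin k, i < j → g (Sum.inl i) < g (Sum.inl j) → g (Sum.inr i) < g (Sum.inr j))}

open Filter Topology Function Finset

theorem tendsto_rpow_one_div_iInf_of_submultiplicative {q : ℕ → ℝ} (hpos : ∀ n, 0 < q n)
    (hmul : ∀ m n, q (m + n) ≤ q m * q n) :
    Tendsto (fun n : ℕ => q n ^ ((1 : ℝ) / n)) atTop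
      (𝓝 (⨅ n : ℕ, q (n + 1) ^ ((1 : ℝ) / ((n : ℝ) + 1)))) := by
  have hlog : Subadditive fun n => Real.log (q n) := fun m n => by
    rw [← Real.log_mul (hpos m).ne' (hpos n).ne']
    exact Real.log_le_log (hpos _) (hmul m n)
  have hexp : ∀ n : ℕ, q n ^ ((1 : ℝ) / n) = Real.exp (Real.log (q n) / n) := fun n => by
    rw [Real.rpow_def_of_pos (hpos n), mul_one_div]
  have hbdd : BddBelow (Set.range fun n : ℕ => q (n + 1) ^ ((1 : ℝ) / ((n : ℝ) + 1))) :=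
    ⟨0, by rintro _ ⟨n, rfl⟩; exact (Real.rpow_pos_of_pos (hpos _) _).le⟩
  refine tendsto_order.2 ⟨fun l hl => ?_, fun x hx => ?_⟩
  · filter_upwards [eventually_ge_atTop 1] with n hn
    obtain ⟨m, rfl⟩ := Nat.exists_eq_add_of_le' hn
    exact hl.trans_le (by exact_mod_cast ciInf_le hbdd m)
  · obtain ⟨m, hm⟩ := exists_lt_of_ciInf_lt hx
    have hx0 : 0 < x := (Real.rpow_pos_of_pos (hpos _) _).trans hm
    have hm' : Real.log (q (m + 1)) / ((m + 1 : ℕ) : ℝ) < Real.log x := by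
      rw [Real.lt_log_iff_exp_lt hx0, ← hexp]; exact_mod_cast hm
    -- This form of Fekete's lemma needs no lower bound on `log (q n) / n`.
    filter_upwards [hlog.eventually_div_lt_of_div_lt m.succ_ne_zero hm'] with n hn
    rw [hexp]
    exact (Real.lt_log_iff_exp_lt hx0).1 hn

section Standardize

variable {α β : Type*} [Fintype α] [LinearOrder β] {m : ℕ}

noncomputable def standardize (f : α ↪ β) (hm : Fintype.card α = m) : α ≃ Fin m :=
  (Equiv.ofBijective (fun z => (⟨f z, mem_map_of_mem f (mem_univ z)⟩ : univ.map f))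
    ⟨fun z z' h => f.injective (congrArg Subtype.val h), fun ⟨x, hx⟩ => by
      obtain ⟨z, -, rfl⟩ := mem_map.1 hx
      exact ⟨z, rfl⟩⟩).trans
    ((univ.map f).orderIsoOfFin (by simpa using hm)).symm.toEquiv

theorem standardize_apply (f : α ↪ β) (hm : Fintype.card α = m) (z : α) :
    standardize f hm z = ((univ.map f).orderIsoOfFin (by simpa using hm)).symm
      ⟨f z, mem_map_of_mem f (mem_univ z)⟩ :=
  rfl

theorem standardize_lt_standardize (f : α ↪ β) (hm : Fintype.card α = m) (z z' : α) :
    standardize f hm z < standardize f hm z' ↔ f z < f z' := by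
  simp [standardize_apply]

theorem orderEmbOfFin_standardize (f : α ↪ β) (hm : Fintype.card α = m) {s : Finset β}
    (hs : univ.map f = s) (h : s.card = m) (z : α) :
    s.orderEmbOfFin h (standardize f hm z) = f z := by
  subst hs
  simp [standardize_apply, ← coe_orderIsoOfFin_apply]

theorem eq_of_map_univ_eq_of_standardize_eq {f f' : α ↪ β} {hm : Fintype.card α = m}
    (hmap : univ.map f = univ.map f') (hstd : standardize f hm = standardize f' hm) :
    f = f' := by
  have h : (univ.map f).card = m := by simpa using hm
  ext z
  rw [← orderEmbOfFin_standardize f hm rfl h, ← orderEmbOfFin_standardize f' hm hmap.symm h,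
    hstd]

end Standardize

section Shuffle

variable {A B : Type*} [Fintype A] [Fintype B] {n p q : ℕ}

theorem map_univ_inr_eq_compl (g : A ⊕ B ≃ Fin n) :
    univ.map (Embedding.inr.trans g.toEmbedding) =
      (univ.map (Embedding.inl.trans g.toEmbedding))ᶜ := by
  ext x
  obtain ⟨z | z, rfl⟩ := g.surjective x <;> simp

theorem card_subtype_le_of_standardize {P : (A ⊕ B ≃ Fin n) → Prop}
    {PA : (A ≃ Fin p) → Prop} {PB : (B ≃ Fin q) → Prop}
    (hp : Fintype.card A = p) (hq : Fintype.card B = q)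
    (hPA : ∀ g, P g → PA (standardize (Embedding.inl.trans g.toEmbedding) hp))
    (hPB : ∀ g, P g → PB (standardize (Embedding.inr.trans g.toEmbedding) hq)) :
    Nat.card {g // P g} ≤ Nat.card {e // PA e} * Nat.card {e // PB e} * n.choose p := by
  let Φ : {g // P g} → {e // PA e} × {e // PB e} × {S : Finset (Fin n) // S.card = p} :=
    fun g => (⟨_, hPA g g.2⟩, ⟨_, hPB g g.2⟩,
      ⟨univ.map (Embedding.inl.trans g.1.toEmbedding), by simpa using hp⟩)
  have hΦ : Injective Φ := by
    rintro ⟨g, hg⟩ ⟨g', hg'⟩ h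
    simp only [Φ, Prod.mk.injEq, Subtype.mk.injEq] at h
    obtain ⟨hA, hB, hS⟩ := h
    have hl := eq_of_map_univ_eq_of_standardize_eq hS hA
    have hr := eq_of_map_univ_eq_of_standardize_eq
      (by rw [map_univ_inr_eq_compl, map_univ_inr_eq_compl, hS]) hB
    refine Subtype.ext (Equiv.ext ?_)
    rintro (z | z)
    · exact DFunLike.congr_fun hl z
    · exact DFunLike.congr_fun hr z
  calc Nat.card {g // P g}
      ≤ Nat.card ({e // PA e} × {e // PB e} × {S : Finset (Fin n) // S.card = p}) :=
        Nat.card_le_card_of_injective Φ hΦ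
    _ = _ := by
      rw [Nat.card_prod, Nat.card_prod, Nat.card_eq_fintype_card (α := {S : Finset (Fin n) // _}),
        Fintype.card_finset_len, Fintype.card_fin, mul_assoc]

end Shuffle

section Admissible

variable {k a : ℕ} {β γ : Type*} [LT β] [LT γ]

def IsAdmissible (g : Fin k ⊕ Fin k → β) : Prop :=
  (∀ j, g (Sum.inr j) < g (Sum.inl j)) ∧
    ∀ i j, i < j → g (Sum.inl i) < g (Sum.inl j) → g (Sum.inr i) < g (Sum.inr j)

theorem IsAdmissible.of_lt_iff {g : Fin k ⊕ Fin k → β} {g' : Fin k ⊕ Fin k → γ}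
    (hg : IsAdmissible g) (h : ∀ z z', g' z < g' z' ↔ g z < g z') : IsAdmissible g' := by
  simp only [IsAdmissible, h] at hg ⊢
  exact hg

theorem IsAdmissible.comp_sumMap {g : Fin k ⊕ Fin k → β} (hg : IsAdmissible g)
    {e : Fin a → Fin k} (he : StrictMono e) : IsAdmissible (g ∘ Sum.map e e) :=
  ⟨fun j => hg.1 (e j), fun _ _ hij => hg.2 _ _ (he hij)⟩

-- `y_j ↦ j` and `x_j ↦ k + j`
theorem isAdmissible_blocks (k : ℕ) :
    IsAdmissible ((Equiv.sumComm _ _).trans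
      (finSumFinEquiv.trans (finCongr (two_mul k).symm)) : Fin k ⊕ Fin k ≃ Fin (2 * k)) := by
  refine ⟨fun j => ?_, fun i j hij _ => ?_⟩ <;>
    simp only [Fin.lt_def, Equiv.trans_apply, Equiv.sumComm_apply, Sum.swap_inl, Sum.swap_inr,
      finSumFinEquiv_apply_left, finSumFinEquiv_apply_right, finCongr_apply, Fin.val_cast,
      Fin.val_castAdd, Fin.val_natAdd] <;>
    omega

theorem nstarCount_pos (k : ℕ) : 0 < NstarCount k :=
  Nat.card_pos_iff.2 ⟨⟨_, isAdmissible_blocks k⟩, inferInstance⟩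

end Admissible

def sumFinAddEquiv (a b : ℕ) :
    (Fin a ⊕ Fin a) ⊕ (Fin b ⊕ Fin b) ≃ Fin (a + b) ⊕ Fin (a + b) :=
  (Equiv.sumSumSumComm _ _ _ _).trans (Equiv.sumCongr finSumFinEquiv finSumFinEquiv)

theorem sumFinAddEquiv_inl (a b : ℕ) (z : Fin a ⊕ Fin a) :
    sumFinAddEquiv a b (Sum.inl z) = Sum.map (Fin.castAdd b) (Fin.castAdd b) z := by
  cases z <;> rfl

theorem sumFinAddEquiv_inr (a b : ℕ) (z : Fin b ⊕ Fin b) :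
    sumFinAddEquiv a b (Sum.inr z) = Sum.map (Fin.natAdd a) (Fin.natAdd a) z := by
  cases z <;> rfl

theorem nstarCount_add_le (a b : ℕ) :
    NstarCount (a + b) ≤ NstarCount a * NstarCount b * (2 * (a + b)).choose (2 * a) := by
  let e := sumFinAddEquiv a b
  have hsplit : NstarCount (a + b) =
      Nat.card {h : (Fin a ⊕ Fin a) ⊕ (Fin b ⊕ Fin b) ≃ Fin (2 * (a + b)) //
        IsAdmissible (e.symm.trans h)} :=
    Nat.card_congr <| (Equiv.equivCongr e.symm (Equiv.refl _)).subtypeEquiv fun g => by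
      simp [IsAdmissible]
  rw [hsplit]
  refine card_subtype_le_of_standardize (by simp [two_mul]) (by simp [two_mul]) ?_ ?_
  · intro h hh
    refine (hh.comp_sumMap (Fin.strictMono_castAdd b)).of_lt_iff fun z z' => ?_
    simp [standardize_lt_standardize, ← sumFinAddEquiv_inl, e]
  · intro h hh
    refine (hh.comp_sumMap (Fin.strictMono_natAdd a)).of_lt_iff fun z z' => ?_
    simp [standardize_lt_standardize, ← sumFinAddEquiv_inr, e]

noncomputable def Qstar (k : ℕ) : ℝ :=
  NstarCount k / (2 * k).factorial

theorem Qstar_pos (k : ℕ) : 0 < Qstar k :=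
  div_pos (by exact_mod_cast nstarCount_pos k) (by exact_mod_cast (2 * k).factorial_pos)

theorem Qstar_add_le (a b : ℕ) : Qstar (a + b) ≤ Qstar a * Qstar b := by
  have hchoose : ((2 * (a + b)).choose (2 * a) * (2 * a).factorial * (2 * b).factorial : ℝ) =
      (2 * (a + b)).factorial := by
    have h := Nat.choose_mul_factorial_mul_factorial (show 2 * a ≤ 2 * (a + b) by omega)
    rw [show 2 * (a + b) - 2 * a = 2 * b by omega] at h
    exact_mod_cast h
  rw [Qstar, Qstar, Qstar, div_mul_div_comm, div_le_div_iff₀ (by positivity) (by positivity)]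
  calc (NstarCount (a + b) : ℝ) * ((2 * a).factorial * (2 * b).factorial)
      ≤ (NstarCount a * NstarCount b * (2 * (a + b)).choose (2 * a) : ℕ) *
          ((2 * a).factorial * (2 * b).factorial) := by
        gcongr; exact_mod_cast nstarCount_add_le a b
    _ = NstarCount a * NstarCount b * (2 * (a + b)).factorial := by
        rw [← hchoose]; push_cast; ring

theorem Qstar_submultiplicative :
    (∀ k₁ k₂ : ℕ, 1 ≤ k₁ → 1 ≤ k₂ →
      (NstarCount (k₁ + k₂) : ℝ) / (Nat.factorial (2 * (k₁ + k₂))) ≤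
      (NstarCount k₁ : ℝ) / (Nat.factorial (2 * k₁)) *
        ((NstarCount k₂ : ℝ) / (Nat.factorial (2 * k₂)))) ∧
    Filter.Tendsto
      (fun k : ℕ => ((NstarCount k : ℝ) / (Nat.factorial (2 * k))) ^ ((1 : ℝ) / (k : ℝ)))
      Filter.atTop
      (nhds (⨅ k : ℕ,
        ((NstarCount (k + 1) : ℝ) / (Nat.factorial (2 * (k + 1)))) ^ ((1 : ℝ) / ((k : ℝ) + 1)))) :=
  ⟨fun k₁ k₂ _ _ => Qstar_add_le k₁ k₂,
    tendsto_rpow_one_div_iInf_of_submultiplicative Qstar_pos Qstar_add_le⟩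
end

section
/- Let σ ∈ S_n. Then the number of permutations π ∈ S_n with π ⪯ σ in the weak Bruhat order equals e(P(σ)), the number of linear extensions of the poset P(σ) induced by σ. -/
/-- `ω₂` is a *simple reduction* of `ω₁`: it is obtained from `ω₁` by interchanging two
adjacent entries `ω₁ i > ω₁ (i+1)`. -/
def IsSimpleReduction {n : ℕ} (ω₁ ω₂ : Equiv.Perm (Fin n)) : Prop :=
  ∃ i j : Fin n, (i : ℕ) + 1 = (j : ℕ) ∧ ω₁ j < ω₁ i ∧ ω₂ = ω₁ * Equiv.swap i j

/-- Weak Bruhat order: `π ⪯ σ` iff there is a chain of simple reductions from `σ` down to `π`. -/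
def WeakLE {n : ℕ} (π σ : Equiv.Perm (Fin n)) : Prop :=
  Relation.ReflTransGen IsSimpleReduction σ π

/-!
Record a permutation by its inversions: the pairs of values `x < y` that it places in reverse
order. Swapping an adjacent descent of `σ` removes exactly one inversion, so `π ⪯ σ` gives
`Inv π ⊆ Inv σ`. Conversely, if `Inv π ⊆ Inv σ` and `π ≠ σ`, then `π⁻¹ * σ` is not the identity
and so has an adjacent descent; since `Inv π ⊆ Inv σ` this is also a descent of `σ` whose
inversion is missing from `Inv π`, and swapping it moves `σ` one step down while keeping
`Inv π ⊆ Inv σ`. Hence `π ⪯ σ ↔ Inv π ⊆ Inv σ`, and the latter says exactly that `π⁻¹` is a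
linear extension of `P(σ)`.
-/

namespace Equiv.Perm

variable {n : ℕ}

/-- The complement of the non-inversion set `E(σ)` within the pairs `x < y`. -/
def inversions (σ : Perm (Fin n)) : Finset (Fin n × Fin n) :=
  {p | p.1 < p.2 ∧ σ⁻¹ p.2 < σ⁻¹ p.1}

@[simp]
lemma mem_inversions {σ : Perm (Fin n)} {x y : Fin n} :
    (x, y) ∈ σ.inversions ↔ x < y ∧ σ⁻¹ y < σ⁻¹ x := by
  simp [inversions]

lemma swap_lt_swap_iff_of_adjacent {i j p q : Fin n} (hij : (i : ℕ) + 1 = j)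
    (hne₁ : ¬(p = i ∧ q = j)) (hne₂ : ¬(p = j ∧ q = i)) :
    swap i j p < swap i j q ↔ p < q := by
  rw [swap_apply_def, swap_apply_def]
  split_ifs <;> subst_vars <;> simp only [Fin.lt_def] at * <;> grind

lemma inversions_mul_swap {σ : Perm (Fin n)} {i j : Fin n} (hij : (i : ℕ) + 1 = j)
    (hσ : σ j < σ i) :
    (σ * swap i j).inversions = σ.inversions.erase (σ j, σ i) := by
  ext ⟨x, y⟩
  obtain ⟨p, rfl⟩ := σ.surjective x
  obtain ⟨q, rfl⟩ := σ.surjective y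
  simp only [mem_inversions, Finset.mem_erase, mul_inv_rev, swap_inv, mul_apply, coe_inv,
    symm_apply_apply, ne_eq, Prod.mk.injEq, σ.injective.eq_iff]
  have hlt : i < j := Fin.lt_def.2 (by omega)
  by_cases hji : p = j ∧ q = i
  · obtain ⟨rfl, rfl⟩ := hji
    simp [hlt.not_gt]
  by_cases hij' : p = i ∧ q = j
  · obtain ⟨rfl, rfl⟩ := hij'
    simp [hσ.not_gt]
  rw [swap_lt_swap_iff_of_adjacent hij (by tauto) (by tauto)]
  tauto

lemma exists_adjacent_descent {f : Perm (Fin n)} (hf : f ≠ 1) :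
    ∃ i j : Fin n, (i : ℕ) + 1 = j ∧ f j < f i := by
  by_contra! h
  obtain _ | m := n
  · exact hf (Subsingleton.elim _ _)
  have hmono : StrictMono f := Fin.strictMono_iff_lt_succ.2 fun k ↦
    (h k.castSucc k.succ (by simp)).lt_of_ne (f.injective.ne Fin.castSucc_lt_succ.ne)
  have hid : ⇑f = id := (hmono.range_inj strictMono_id).1 (by simp [f.surjective.range_eq])
  exact hf (DFunLike.coe_injective hid)

lemma inversions_subset_iff {π σ : Perm (Fin n)} :
    π.inversions ⊆ σ.inversions ↔ ∀ i j : Fin n, i < j → σ⁻¹ i < σ⁻¹ j → π⁻¹ i < π⁻¹ j := by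
  refine ⟨fun h i j hij hσ ↦ ?_, fun h ⟨i, j⟩ hπ ↦ ?_⟩
  · by_contra! hπ
    have hπ' := (π⁻¹.injective.ne hij.ne).lt_of_le' hπ
    exact hσ.not_gt (mem_inversions.1 (h (mem_inversions.2 ⟨hij, hπ'⟩))).2
  · obtain ⟨hij, hπ⟩ := mem_inversions.1 hπ
    refine mem_inversions.2 ⟨hij, ?_⟩
    by_contra! hσ
    exact hπ.not_gt (h i j hij ((σ⁻¹.injective.ne hij.ne).lt_of_le hσ))

lemma exists_descent_notMem_inversions {π σ : Perm (Fin n)}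
    (h : π.inversions ⊆ σ.inversions) (hne : π ≠ σ) :
    ∃ i j : Fin n, (i : ℕ) + 1 = j ∧ σ j < σ i ∧ (σ j, σ i) ∉ π.inversions := by
  obtain ⟨i, j, hij, hπ⟩ := exists_adjacent_descent (f := π⁻¹ * σ) (by
    rwa [Ne, inv_mul_eq_one])
  simp only [mul_apply] at hπ
  have hσ : σ j < σ i := by
    by_contra! hσ
    have := (mem_inversions.1 (h (mem_inversions.2
      ⟨(σ.injective.ne (by omega)).lt_of_le' hσ, hπ⟩))).2
    simp only [coe_inv, symm_apply_apply, Fin.lt_def] at this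
    omega
  exact ⟨i, j, hij, hσ, fun hmem ↦ hπ.not_gt (mem_inversions.1 hmem).2⟩

end Equiv.Perm

open Equiv Perm

lemma inversions_subset_of_weakLE {n : ℕ} {π σ : Perm (Fin n)} (h : WeakLE π σ) :
    π.inversions ⊆ σ.inversions := by
  induction h with
  | refl => rfl
  | tail _ hstep ih =>
    obtain ⟨i, j, hij, hσ, rfl⟩ := hstep
    rw [inversions_mul_swap hij hσ]
    exact (Finset.erase_subset _ _).trans ih

lemma weakLE_of_inversions_subset {n : ℕ} {π σ : Perm (Fin n)}
    (h : π.inversions ⊆ σ.inversions) : WeakLE π σ := by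
  induction hc : σ.inversions.card using Nat.strong_induction_on generalizing σ with
  | _ c ih =>
    by_cases hπσ : π = σ
    · exact hπσ ▸ Relation.ReflTransGen.refl
    obtain ⟨i, j, hij, hσ, hπ⟩ := exists_descent_notMem_inversions h hπσ
    have hinv := inversions_mul_swap hij hσ
    have hmem : (σ j, σ i) ∈ σ.inversions :=
      mem_inversions.2 ⟨hσ, by simp only [coe_inv, symm_apply_apply, Fin.lt_def]; omega⟩
    refine Relation.ReflTransGen.head ⟨i, j, hij, hσ, rfl⟩ (ih _ ?_ ?_ rfl)
    · rw [← hc, hinv]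
      exact Finset.card_erase_lt_of_mem hmem
    · rw [hinv]
      exact Finset.subset_erase.2 ⟨h, hπ⟩

lemma weakLE_iff_inversions_subset {n : ℕ} {π σ : Perm (Fin n)} :
    WeakLE π σ ↔ π.inversions ⊆ σ.inversions :=
  ⟨inversions_subset_of_weakLE, weakLE_of_inversions_subset⟩

/-- The number of `π ⪯ σ` equals `e(P(σ))`, the number of linear extensions of the
poset `P(σ)` induced by `σ`, in which `i < j` iff `(i,j)` is a non-inversion of `σ`. -/
theorem weak_bruhat_count_eq_linear_extensions (n : ℕ) (σ : Equiv.Perm (Fin n)) :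
    Nat.card {π : Equiv.Perm (Fin n) // WeakLE π σ} =
      Nat.card {L : Equiv.Perm (Fin n) //
        ∀ i j : Fin n, i < j → σ⁻¹ i < σ⁻¹ j → L i < L j} :=
  Nat.card_congr <| (Equiv.inv _).subtypeEquiv fun π ↦ by
    rw [weakLE_iff_inversions_subset, inversions_subset_iff, Equiv.inv_apply]
end
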